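/- The class of non-emitting backoff models is strictly more powerful than the class of backoff models: there exists a valid non-emitting backoff model θ over the binary alphabet A = {0,1} such that for every valid backoff model θ' over A (with any finite dictionary), there exists a length T and a string x^T ∈ A^T with p_ε(x^T | θ) ≠ p_b(x^T | θ'). -/
import Mathlib


open Finset

/-- The set `E(x)` of symbols available in context `x` in the dictionary `E`. -/
def Ectx {A : Type*} [DecidableEq A] (E : Finset (List A × A)) (x : List A) :
    Finset A :=
  (E.filter (fun p => p.1 = x)).image Prod.snd

/-- Backoff model conditional probability `p_b(y|x)`: if `(x,y) ∈ E` it is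
`δ(y|x)`; otherwise it backs off to the suffix `x.tail`, rescaled by
`η(x) = (1 − ∑_{z∈E(x)} δ(z|x)) / (1 − ∑_{z∈E(x)} p_b(z|x.tail))`. -/
noncomputable def pb {A : Type*} [Fintype A] [DecidableEq A]
    (E : Finset (List A × A)) (d : List A → A → ℝ) : List A → A → ℝ
  | [], y => if ([], y) ∈ E then d [] y else 0
  | a :: x, y =>
      if (a :: x, y) ∈ E then d (a :: x) y
      else
        ((1 - ∑ z ∈ Ectx E (a :: x), d (a :: x) z) /
            (1 - ∑ z ∈ Ectx E (a :: x), pb E d x z)) * pb E d x y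

/-- Backoff model string probability: probability of emitting `w` after history `h`. -/
noncomputable def pbStr {A : Type*} [Fintype A] [DecidableEq A]
    (E : Finset (List A × A)) (d : List A → A → ℝ) : List A → List A → ℝ
  | _, [] => 1
  | h, y :: w => pb E d h y * pbStr E d (h ++ [y]) w
/-- The rescalar `η(x)` of a backoff model. -/
noncomputable def eta {A : Type*} [Fintype A] [DecidableEq A]
    (E : Finset (List A × A)) (d : List A → A → ℝ) (x : List A) : ℝ :=
  (1 - ∑ z ∈ Ectx E x, d x z) / (1 - ∑ z ∈ Ectx E x, pb E d x.tail z)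

/-- Non-emitting backoff model: probability of emitting the string `w` from
state `x`; backoff from `x` to its suffix `x.tail` is permanent. -/
noncomputable def peb {A : Type*} [Fintype A] [DecidableEq A]
    (E : Finset (List A × A)) (d : List A → A → ℝ) : List A → List A → ℝ
  | _, [] => 1
  | [], y :: w => if ([], y) ∈ E then d [] y * peb E d [y] w else 0
  | a :: x, y :: w =>
      if (a :: x, y) ∈ E then d (a :: x) y * peb E d ((a :: x) ++ [y]) w
      else eta E d (a :: x) * peb E d x (y :: w)
termination_by x w => (w.length, x.length)
/-- Validity conditions for a backoff model `(E, d)`: every 0th order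
transition is in `E` with a strictly positive distribution; dictionary
transitions have strictly positive probability; and in every nonempty context
the dictionary probabilities sum to `1` if all symbols are available and to
strictly less than `1` otherwise. -/
def ValidBackoff {A : Type*} [Fintype A] [DecidableEq A]
    (E : Finset (List A × A)) (d : List A → A → ℝ) : Prop :=
  (∀ y : A, ([], y) ∈ E) ∧ (∀ y : A, 0 < d [] y) ∧ (∑ y : A, d [] y = 1) ∧
  (∀ (x : List A) (y : A), x ≠ [] → (x, y) ∈ E → 0 < d x y) ∧
  (∀ x : List A, x ≠ [] →
    (Ectx E x = Finset.univ → ∑ y ∈ Ectx E x, d x y = 1) ∧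
    (Ectx E x ≠ Finset.univ → ∑ y ∈ Ectx E x, d x y < 1))


section Counterexample

/-- The dictionary of the counterexample non-emitting backoff model. -/
def Eth : Finset (List (Fin 2) × Fin 2) :=
  {([], 0), ([], 1), ([0], 0), ([0,0,0], 0), ([1], 0), ([1,0], 0), ([1,0,0], 0)}

/-- The dictionary probabilities of the counterexample model. -/
noncomputable def dth : List (Fin 2) → Fin 2 → ℝ :=
  fun x _ => if x = [0,0,0] then 1/3 else 1/2

lemma dth_ne {x : List (Fin 2)} (h : x ≠ [0,0,0]) (y : Fin 2) : dth x y = 1/2 :=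
  if_neg h

lemma dth_000 (y : Fin 2) : dth [0,0,0] y = 1/3 := if_pos rfl

lemma Ectx_00 : Ectx Eth ([0,0] : List (Fin 2)) = ∅ := by decide
lemma Ectx_0000 : Ectx Eth ([0,0,0,0] : List (Fin 2)) = ∅ := by decide
lemma Ectx_1000 : Ectx Eth ([1,0,0,0] : List (Fin 2)) = ∅ := by decide

lemma pebA : ∀ k, peb Eth dth [0,0] (List.replicate k 0) = (1/2 : ℝ) ^ k := by
  intro k
  induction k with
  | zero => simp [peb]
  | succ k ih =>
      rw [List.replicate_succ, peb, if_neg (by decide), peb, if_pos (by decide)]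
      simp only [eta, Ectx_00, Finset.sum_empty, List.cons_append, List.nil_append]
      rw [ih, dth_ne (by decide)]
      norm_num [pow_succ]
      ring

lemma pebB : ∀ k, peb Eth dth [0,0,0,0] (List.replicate k 0) = (1/3 : ℝ) ^ k := by
  intro k
  induction k with
  | zero => simp [peb]
  | succ k ih =>
      rw [List.replicate_succ, peb, if_neg (by decide), peb, if_pos (by decide)]
      simp only [eta, Ectx_0000, Finset.sum_empty, List.cons_append, List.nil_append]
      rw [ih, dth_000]
      norm_num [pow_succ]
      ring

lemma pebC : ∀ k, peb Eth dth [1,0,0,0] (List.replicate k 0) = (1/3 : ℝ) ^ k := by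
  intro k
  cases k with
  | zero => simp [peb]
  | succ k =>
      rw [List.replicate_succ, peb, if_neg (by decide), peb, if_pos (by decide)]
      simp only [eta, Ectx_1000, Finset.sum_empty, List.cons_append, List.nil_append]
      rw [pebB k, dth_000]
      norm_num [pow_succ]
      ring

lemma pebT1 : ∀ n, peb Eth dth [] (List.replicate n 0) = (1/2 : ℝ) ^ n := by
  intro n
  match n with
  | 0 => simp [peb]
  | 1 =>
      show peb Eth dth [] [0] = _
      rw [peb, if_pos (by decide)]
      rw [show peb Eth dth [0] [] = 1 by simp [peb], dth_ne (by decide)]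
      norm_num
  | (k+2) =>
      rw [List.replicate_succ, peb, if_pos (by decide)]
      rw [List.replicate_succ, peb, if_pos (by decide)]
      simp only [List.cons_append, List.nil_append]
      rw [pebA k, dth_ne (show ([] : List (Fin 2)) ≠ [0,0,0] by decide),
        dth_ne (show ([0] : List (Fin 2)) ≠ [0,0,0] by decide)]
      rw [show k+2 = k+1+1 from rfl, pow_succ, pow_succ]
      ring

lemma pebT2 : ∀ m, peb Eth dth [] (1 :: List.replicate (m+3) 0)
    = (1/16 : ℝ) * (1/3) ^ m := by
  intro m
  rw [peb, if_pos (by decide)]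
  rw [show m+3 = (m+2)+1 from rfl, List.replicate_succ, peb, if_pos (by decide)]
  simp only [List.cons_append, List.nil_append]
  rw [show m+2 = (m+1)+1 from rfl, List.replicate_succ, peb, if_pos (by decide)]
  simp only [List.cons_append, List.nil_append]
  rw [List.replicate_succ, peb, if_pos (by decide)]
  simp only [List.cons_append, List.nil_append]
  rw [pebC m, dth_ne (show ([] : List (Fin 2)) ≠ [0,0,0] by decide),
    dth_ne (show ([1] : List (Fin 2)) ≠ [0,0,0] by decide),
    dth_ne (show ([1,0] : List (Fin 2)) ≠ [0,0,0] by decide),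
    dth_ne (show ([1,0,0] : List (Fin 2)) ≠ [0,0,0] by decide)]
  ring

lemma Eth_snd : ∀ p ∈ Eth, p.1 = [] ∨ p.2 = 0 := by decide

lemma validTh : ValidBackoff Eth dth := by
  refine ⟨by decide, ?_, ?_, ?_, ?_⟩
  · intro y; rw [dth_ne (by decide)]; norm_num
  · rw [Fin.sum_univ_two, dth_ne (by decide), dth_ne (by decide)]; norm_num
  · intro x y hx hxy
    unfold dth; split <;> norm_num
  · intro x hx
    have hsub : Ectx Eth x ⊆ {0} := by
      intro y hy
      simp only [Ectx, Finset.mem_image, Finset.mem_filter] at hy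
      obtain ⟨p, ⟨hpE, hp1⟩, hp2⟩ := hy
      rcases Eth_snd p hpE with h | h
      · exact absurd (hp1 ▸ h) hx
      · simp [← hp2, h]
    have hne : Ectx Eth x ≠ Finset.univ := by
      intro h
      have h1 : (1 : Fin 2) ∈ Ectx Eth x := h ▸ Finset.mem_univ 1
      have := hsub h1
      simp at this
    refine ⟨fun h => absurd h hne, fun _ => ?_⟩
    calc ∑ y ∈ Ectx Eth x, dth x y ≤ ∑ y ∈ ({0} : Finset (Fin 2)), dth x y := by
          apply Finset.sum_le_sum_of_subset_of_nonneg hsub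
          intro i _ _
          unfold dth; split <;> norm_num
      _ = dth x 0 := Finset.sum_singleton _ _
      _ < 1 := by unfold dth; split <;> norm_num

lemma pbStr_append {E' : Finset (List (Fin 2) × Fin 2)} {d' : List (Fin 2) → Fin 2 → ℝ} :
    ∀ (w h : List (Fin 2)) (y : Fin 2),
      pbStr E' d' h (w ++ [y]) = pbStr E' d' h w * pb E' d' (h ++ w) y := by
  intro w
  induction w with
  | nil => intro h y; simp [pbStr]
  | cons a w ih =>
      intro h y
      rw [List.cons_append, pbStr, ih (h ++ [a]) y, pbStr]
      simp [mul_assoc]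

lemma pb_no_ctx {E' : Finset (List (Fin 2) × Fin 2)} {d' : List (Fin 2) → Fin 2 → ℝ}
    {a : Fin 2} {x : List (Fin 2)} (h : ∀ z : Fin 2, (a :: x, z) ∉ E') (y : Fin 2) :
    pb E' d' (a :: x) y = pb E' d' x y := by
  have hE : Ectx E' (a :: x) = ∅ := by
    ext z
    simp only [Ectx, Finset.mem_image, Finset.mem_filter, Finset.notMem_empty, iff_false]
    rintro ⟨p, ⟨hpE, hp1⟩, hp2⟩
    exact h z (by rw [← hp2, ← hp1]; exact hpE)
  rw [pb, if_neg (h y), hE]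
  simp

end Counterexample

/-- The class of non-emitting backoff models is strictly more powerful than
the class of backoff models: over the binary alphabet, there is a valid
non-emitting backoff model that disagrees with every valid backoff model on
the probability of some string. -/
theorem exists_nonemitting_backoff_not_backoff :
    ∃ (E : Finset (List (Fin 2) × Fin 2)) (d : List (Fin 2) → Fin 2 → ℝ),
      ValidBackoff E d ∧
      ∀ (E' : Finset (List (Fin 2) × Fin 2)) (d' : List (Fin 2) → Fin 2 → ℝ),
        ValidBackoff E' d' →
        ∃ x : List (Fin 2), peb E d [] x ≠ pbStr E' d' [] x := by
  refine ⟨Eth, dth, validTh, ?_⟩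
  intro E' d' hvalid'
  by_contra hno
  push_neg at hno
  set N := E'.sup (fun p => p.1.length) with hN
  have hlen : ∀ (h : List (Fin 2)) (y : Fin 2), N < h.length → (h, y) ∉ E' := by
    intro h y hl hm
    have := Finset.le_sup (f := fun p : List (Fin 2) × Fin 2 => p.1.length) hm
    simp only at this
    omega
  set n := N + 3 with hn
  -- first chain: pb' over context 0^n equals 1/2
  have hA := hno (List.replicate n 0)
  have hA1 := hno (List.replicate (n+1) 0)
  rw [pebT1] at hA hA1
  rw [List.replicate_succ', pbStr_append, List.nil_append, ← hA] at hA1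
  have hc1 : pb E' d' (List.replicate n 0) 0 = 1/2 := by
    have hne : ((1:ℝ)/2) ^ n ≠ 0 := by positivity
    rw [pow_succ] at hA1
    exact (mul_left_cancel₀ hne hA1).symm
  -- second chain: pb' over context 1 :: 0^n equals 1/3
  have hB := hno (1 :: List.replicate n 0)
  have hB1 := hno (1 :: List.replicate (n+1) 0)
  rw [hn, pebT2 N] at hB
  rw [hn, show N + 3 + 1 = (N+1) + 3 from rfl, pebT2 (N+1)] at hB1
  rw [show (1 :: List.replicate (n+1) 0 : List (Fin 2)) = (1 :: List.replicate n 0) ++ [0] by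
        rw [List.replicate_succ']; simp, pbStr_append, List.nil_append, ← hB] at hB1
  have hc2 : pb E' d' (1 :: List.replicate n 0) 0 = 1/3 := by
    have hne : (1/16 : ℝ) * ((1:ℝ)/3) ^ N ≠ 0 := by positivity
    rw [pow_succ, ← mul_assoc] at hB1
    exact (mul_left_cancel₀ hne hB1).symm
  have hsuf : pb E' d' (1 :: List.replicate n 0) 0 = pb E' d' (List.replicate n 0) 0 := by
    apply pb_no_ctx
    intro z
    apply hlen
    simp only [List.length_cons, List.length_replicate, hn]
    omega
  rw [hsuf, hc1] at hc2
  norm_num at hc2
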